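/- arXiv:1605.05499 — 4 statements merged into one kernel-verified Lean document; each statement's English description precedes it below -/
import Mathlib

section
/- Let G be an n-sum of multigraphs K and H along an n-element vertex set U (n ≥ 1), and let x, y be real numbers with x ≠ 1 and y ≠ 1. Let B = (b_{AB}) be any real matrix indexed by Γ(U) satisfying T_n(t) · B · T_n(t) = T_n(t) for t = (x−1)(y−1). Then T(G;x,y) = Σ_{A,B ∈ Γ(U)} c_{AB} · T(K/A;x,y) · T(H/B;x,y), where c_{AB} = b_{AB} · (x−1)^{ω(K/A)+ω(H/B)−ω(G)} · (y−1)^{|A|+|B|−n}, the powers being integer powers (zpow, the exponents may be negative). -/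
attribute [local instance] Classical.propDecidable

/-- A multigraph: a finite vertex type, a finite edge index type, and an endpoint
map sending each edge to an unordered pair of vertices. -/
structure Multigraph where
  V : Type
  E : Type
  [finV : Fintype V]
  [finE : Fintype E]
  ends : E → Sym2 V

attribute [instance] Multigraph.finV Multigraph.finE

namespace Multigraph

/-- Two vertices are related if some edge of `S` has them as its endpoints. -/
def rel (G : Multigraph) (S : Finset G.E) (v w : G.V) : Prop :=
  ∃ e ∈ S, G.ends e = s(v, w)

/-- `ω(S)`: the number of connected components of the spanning subgraph `(V(G), S)`. -/
noncomputable def omega (G : Multigraph) (S : Finset G.E) : ℕ :=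
  Nat.card (Quotient (Relation.EqvGen.setoid (G.rel S)))

/-- `ω(G)`: the number of connected components of `G`. -/
noncomputable def omegaG (G : Multigraph) : ℕ :=
  G.omega Finset.univ

/-- The Negami polynomial `f(G;t,x,y)`. -/
noncomputable def negami (G : Multigraph) (t x y : ℝ) : ℝ :=
  ∑ S : Finset G.E, t ^ G.omega S * x ^ S.card * y ^ (Fintype.card G.E - S.card)

/-- The Tutte polynomial `T(G;x,y)`. -/
noncomputable def tutte (G : Multigraph) (x y : ℝ) : ℝ :=
  ∑ S : Finset G.E,
    (x - 1) ^ (G.omega S - G.omegaG) *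
      (y - 1) ^ (G.omega S + S.card - Fintype.card G.V)

end Multigraph

/-- The setoid on `V` extending a setoid `A` on the subset `U`: its nontrivial
classes are exactly the blocks of `A`. -/
def extendSetoid {V : Type} (U : Set V) (A : Setoid U) : Setoid V where
  r v w := v = w ∨ ∃ (hv : v ∈ U) (hw : w ∈ U), A.r ⟨v, hv⟩ ⟨w, hw⟩
  iseqv := by
    constructor
    · exact fun v => Or.inl rfl
    · rintro v w (rfl | ⟨hv, hw, h⟩)
      · exact Or.inl rfl
      · exact Or.inr ⟨hw, hv, A.symm h⟩
    · rintro v w z (rfl | ⟨hv, hw, h⟩) (rfl | ⟨hw', hz, h'⟩)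
      · exact Or.inl rfl
      · exact Or.inr ⟨hw', hz, h'⟩
      · exact Or.inr ⟨hv, hw, h⟩
      · exact Or.inr ⟨hv, hz, A.trans h h'⟩

namespace Multigraph

/-- The contraction `K/A` of a multigraph `K` by a partition `A` of a subset `U` of
its vertices: all vertices in a common block of `A` are identified. -/
noncomputable def contract (K : Multigraph) {U : Set K.V} (A : Setoid U) : Multigraph where
  V := Quotient (extendSetoid U A)
  E := K.E
  finV := Fintype.ofFinite _
  finE := K.finE
  ends e := (K.ends e).map (Quotient.mk (extendSetoid U A))

/-- `P(S)`: the partition of `U` in which two vertices lie in the same block iff they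
lie in the same connected component of the spanning subgraph `(V(K), S)`. -/
def part (K : Multigraph) (U : Set K.V) (S : Finset K.E) : Setoid U :=
  Setoid.comap Subtype.val (Relation.EqvGen.setoid (K.rel S))

/-- The auxiliary Negami polynomial `f_A(K;t,x,y)`. -/
noncomputable def negamiAux (K : Multigraph) (U : Set K.V) (A : Setoid U) (t x y : ℝ) : ℝ :=
  ∑ S : Finset K.E,
    if K.part U S = A then
      t ^ (K.omega S - Nat.card (Quotient A)) * x ^ S.card *
        y ^ (Fintype.card K.E - S.card)
    else 0

/-- The auxiliary Tutte polynomial `T_A(K;x,y)`. -/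
noncomputable def tutteAux (K : Multigraph) (U : Set K.V) (A : Setoid U) (x y : ℝ) : ℝ :=
  ∑ S : Finset K.E,
    if K.part U S = A then
      (x - 1) ^ (K.omega S - Nat.card (Quotient A)) *
        (y - 1) ^ (K.omega S + S.card - Fintype.card K.V)
    else 0

end Multigraph

/-- The set of partitions of a finite type is finite. -/
instance setoidFinite {α : Type} [Finite α] : Finite (Setoid α) :=
  Finite.of_injective (fun s : Setoid α => s.r) fun a b h => by
    cases a; cases b; simp only at h; subst h; rfl

noncomputable instance setoidFintype {α : Type} [Finite α] : Fintype (Setoid α) :=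
  Fintype.ofFinite _

/-- The number of blocks `|A|` of a partition (setoid) `A`. -/
noncomputable def nblocks {α : Type} (A : Setoid α) : ℕ :=
  Nat.card (Quotient A)

/-- The matrix `T_n(t)` indexed by partitions of `α`, with `(A,B)`-entry
`t^{|A∧B|}` where `A∧B` is the finest common coarsening (the join `A ⊔ B`). -/
noncomputable def Tmat (α : Type) [Finite α] (t : ℝ) :
    Matrix (Setoid α) (Setoid α) ℝ :=
  Matrix.of fun A B => t ^ nblocks (A ⊔ B)

/-- The matrix `L_n(x)` indexed by partitions of `α`, with `(A,B)`-entry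
`(x-1)^{|A∧B|-1}` if `|A∧B| + n = |A| + |B|` and `0` otherwise. -/
noncomputable def Lmat (α : Type) [Finite α] (n : ℕ) (x : ℝ) :
    Matrix (Setoid α) (Setoid α) ℝ :=
  Matrix.of fun A B =>
    if nblocks (A ⊔ B) + n = nblocks A + nblocks B then
      (x - 1) ^ (nblocks (A ⊔ B) - 1)
    else 0

/-- The connectivity matrix `A_n` indexed by partitions of `α`, with `(A,B)`-entry
`1` if `|A∧B| = 1` and `0` otherwise. -/
noncomputable def Amat (α : Type) [Finite α] :
    Matrix (Setoid α) (Setoid α) ℝ :=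
  Matrix.of fun A B => if nblocks (A ⊔ B) = 1 then (1 : ℝ) else 0

/-- `G` is an `n`-sum of `K` and `H` along `U`: `V(G) = V(K) ∪ V(H)`,
`V(K) ∩ V(H) = U`, and `E(G)` is the disjoint union of `E(K)` and `E(H)` with the
inherited endpoint maps. -/
structure NSum (G K H : Multigraph) (U : Set G.V) where
  ιK : K.V → G.V
  ιH : H.V → G.V
  injK : Function.Injective ιK
  injH : Function.Injective ιH
  cover : Set.range ιK ∪ Set.range ιH = Set.univ
  inter : Set.range ιK ∩ Set.range ιH = U
  edgeEquiv : G.E ≃ K.E ⊕ H.E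
  endsK : ∀ a, G.ends (edgeEquiv.symm (Sum.inl a)) = (K.ends a).map ιK
  endsH : ∀ a, G.ends (edgeEquiv.symm (Sum.inr a)) = (H.ends a).map ιH

namespace NSum

variable {G K H : Multigraph} {U : Set G.V}

/-- The copy of a partition `A` of `U` on the corresponding subset of `V(K)`. -/
def pullK (σ : NSum G K H U) (A : Setoid U) : Setoid (σ.ιK ⁻¹' U : Set K.V) :=
  Setoid.comap (fun v => ⟨σ.ιK v.1, v.2⟩) A

/-- The copy of a partition `A` of `U` on the corresponding subset of `V(H)`. -/
def pullH (σ : NSum G K H U) (A : Setoid U) : Setoid (σ.ιH ⁻¹' U : Set H.V) :=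
  Setoid.comap (fun v => ⟨σ.ιH v.1, v.2⟩) A

/-- The contraction `K/A` for a partition `A` of the common vertex set `U`. -/
noncomputable def contractK (σ : NSum G K H U) (A : Setoid U) : Multigraph :=
  K.contract (σ.pullK A)

/-- The contraction `H/B` for a partition `B` of the common vertex set `U`. -/
noncomputable def contractH (σ : NSum G K H U) (B : Setoid U) : Multigraph :=
  H.contract (σ.pullH B)

end NSum


/-!
Write `X = x - 1`, `Y = y - 1` and `t = XY`. Up to the monomial `X ^ ω(G) * Y ^ |V(G)|`, the
Tutte polynomial is the Negami polynomial `f(G; t, Y, 1) = ∑_S t ^ ω(S) * Y ^ |S|`.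

Let `S = P ∪ Q` be an edge set of the `n`-sum, with `P ⊆ E(K)` and `Q ⊆ E(H)`, and let `A_P`
and `B_Q` be the partitions of `U` induced by the components of `P` and of `Q`. A component of
`(V(G), S)` that avoids `U` is a component of `P` or of `Q`; the components that meet `U`
correspond to the blocks of the join `A_P ⊔ B_Q`. Hence
`ω_G(S) = (ω_K(P) - |A_P|) + (ω_H(Q) - |B_Q|) + |A_P ⊔ B_Q|`, and sorting the edge sets by
`(A_P, B_Q)` gives `f(G) = ∑_{A,B} t ^ |A ⊔ B| f_A(K) f_B(H) = aᵀ T_n(t) b` with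
`a = (f_A(K))_A` and `b = (f_B(H))_B`. The same count, with the identification by `C` in the role
of the second partition glued to `K` along `U`, gives `f(K/C) = (aᵀ T_n(t))_C`, and likewise
`f(H/D) = (T_n(t) b)_D`. Substituting `T_n(t) = T_n(t) B T_n(t)` into `aᵀ T_n(t) b` yields
`f(G) = ∑_{C,D} b_{CD} f(K/C) f(H/D)`. Dividing by the monomials, and using
`|V(K/C)| + |V(H/D)| - |V(G)| = |C| + |D| - n`, gives the formula.
-/

theorem Sym2.map_eq_mk_iff {α β : Type*} (f : α → β) (z : Sym2 α) (v w : β) :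
    z.map f = s(v, w) ↔ ∃ a b, z = s(a, b) ∧ f a = v ∧ f b = w := by
  induction z using Sym2.ind with
  | _ a b =>
    rw [Sym2.map_mk, Sym2.eq_iff]
    constructor
    · rintro (⟨rfl, rfl⟩ | ⟨rfl, rfl⟩)
      exacts [⟨a, b, rfl, rfl, rfl⟩, ⟨b, a, Sym2.eq_swap, rfl, rfl⟩]
    · rintro ⟨c, d, hcd, rfl, rfl⟩
      rcases Sym2.eq_iff.1 hcd with ⟨rfl, rfl⟩ | ⟨rfl, rfl⟩
      exacts [Or.inl ⟨rfl, rfl⟩, Or.inr ⟨rfl, rfl⟩]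

theorem Set.restrictPreimage_bijective_of_subset_range {α β : Type*} {f : α → β}
    (hf : Function.Injective f) {U : Set β} (hU : U ⊆ Set.range f) :
    Function.Bijective (U.restrictPreimage f) :=
  ⟨U.restrictPreimage_injective hf, Set.range_eq_univ.1 <| by
    rw [Set.range_restrictPreimage]
    exact Set.eq_univ_of_forall fun u => hU u.2⟩

theorem Finset.sum_mul_eq_sum_fiberwise {ι κ R : Type*} [Fintype ι] [Fintype κ] [DecidableEq κ]
    [NonUnitalNonAssocSemiring R] (c : ι → κ) (F : κ → R) (g : κ → ι → R) :
    ∑ i, F (c i) * g (c i) i = ∑ k, F k * ∑ i, if c i = k then g k i else 0 := by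
  simp only [Finset.mul_sum, mul_ite, mul_zero]
  rw [Finset.sum_comm]
  simp

open Matrix in
theorem Matrix.dotProduct_mulVec_eq_sum_of_mul_mul_eq {ι R : Type*} [Fintype ι] [CommSemiring R]
    {T B : Matrix ι ι R} (h : T * B * T = T) (a b : ι → R) :
    a ⬝ᵥ (T *ᵥ b) = ∑ C, ∑ D, B C D * (a ᵥ* T) C * (T *ᵥ b) D := by
  calc a ⬝ᵥ (T *ᵥ b) = a ⬝ᵥ ((T * B * T) *ᵥ b) := by rw [h]
    _ = (a ᵥ* T) ⬝ᵥ (B *ᵥ (T *ᵥ b)) := by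
      rw [← Matrix.mulVec_mulVec, ← Matrix.mulVec_mulVec, Matrix.dotProduct_mulVec]
    _ = _ := by
      refine Finset.sum_congr rfl fun C _ => ?_
      rw [mulVec, dotProduct, Finset.mul_sum]
      exact Finset.sum_congr rfl fun D _ => by ring

namespace Setoid

variable {V W : Type}

theorem nblocks_le_of_le [Finite V] {s t : Setoid V} (h : s ≤ t) : nblocks t ≤ nblocks s :=
  Nat.card_le_card_of_surjective (map_of_le h) fun q => q.inductionOn fun x => ⟨⟦x⟧, rfl⟩

theorem nblocks_comap_of_surjective {f : W → V} (hf : Function.Surjective f) (s : Setoid V) :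
    nblocks (comap f s) = nblocks s := by
  rw [nblocks, Nat.card_congr (comapQuotientEquiv f s),
    (Quotient.mk''_surjective.comp hf).range_eq, Nat.card_univ, nblocks]

def comapOrderIso (e : W ≃ V) : Setoid V ≃o Setoid W where
  toFun := comap e
  invFun := comap e.symm
  left_inv s := by ext; simp [comap_rel]
  right_inv s := by ext; simp [comap_rel]
  map_rel_iff' {s t} := by
    change comap e s ≤ comap e t ↔ s ≤ t
    refine ⟨fun h x y hxy => ?_, fun h _ _ hxy => h hxy⟩
    simpa [comap_rel] using @h (e.symm x) (e.symm y) (by simpa [comap_rel] using hxy)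

theorem eqvGen_map (r : W → W → Prop) (f : W → V) :
    Relation.EqvGen.setoid (Relation.Map r f f) = (Relation.EqvGen.setoid r).map f :=
  le_antisymm (eqvGen_mono fun _ _ ⟨a, b, h, ha, hb⟩ => ⟨a, b, Relation.EqvGen.rel _ _ h, ha, hb⟩)
    (eqvGen_le fun _ _ ⟨_, _, h, ha, hb⟩ => ha ▸ hb ▸
      (eqvGen_le (s := comap f (Relation.EqvGen.setoid (Relation.Map r f f)))
        fun a b h => Relation.EqvGen.rel _ _ ⟨a, b, h, rfl, rfl⟩) h)

theorem nblocks_map_mk (s e : Setoid V) : nblocks (s.map (Quotient.mk e)) = nblocks (s ⊔ e) := by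
  have hcomap : comap (Quotient.mk e) (s.map (Quotient.mk e)) = s ⊔ e := by
    refine le_antisymm (fun x y h => ?_) (sup_le le_comap_map fun x y h => ?_)
    · have hmono : s.map (Quotient.mk e) ≤ (s ⊔ e).map (Quotient.mk e) :=
        eqvGen_mono fun _ _ ⟨a, b, h, ha, hb⟩ => ⟨a, b, le_sup_left (b := e) h, ha, hb⟩
      rw [← comap_map_of_ker_le (Quotient.mk e) (s ⊔ e) ((ker_mk_eq e).le.trans le_sup_right)]
      exact hmono h
    · change (s.map (Quotient.mk e)) (Quotient.mk e x) (Quotient.mk e y)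
      rw [Quotient.sound h]
  rw [← nblocks_comap_of_surjective Quotient.mk_surjective, hcomap]

theorem nblocks_le_nblocks_sup_add_one [Finite V] (s : Setoid V) {r : V → V → Prop} {a b : V}
    (hr : ∀ x y, r x y → s(x, y) = s(a, b)) :
    nblocks s ≤ nblocks (s ⊔ Relation.EqvGen.setoid r) + 1 := by
  -- `g` moves the class of `a` onto the class of `b`; it is constant on the classes of the join.
  let g : V → Quotient s := fun z => if s z a then Quotient.mk s b else Quotient.mk s z
  have hker : s ⊔ Relation.EqvGen.setoid r ≤ ker g := by
    refine sup_le (fun x y hxy => ?_) (eqvGen_le fun x y hxy => ?_)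
    · have : s x a ↔ s y a := ⟨s.trans (s.symm hxy), s.trans hxy⟩
      by_cases hx : s x a
      · simp [g, hx, this.1 hx]
      · simp [g, hx, mt this.2 hx, Quotient.sound hxy]
    · rcases Sym2.eq_iff.1 (hr x y hxy) with ⟨rfl, rfl⟩ | ⟨rfl, rfl⟩ <;> simp [ker_def, g]
  have hrange : {Quotient.mk s a}ᶜ ⊆ Set.range (Quotient.lift g hker) := by
    intro q hq
    induction q using Quotient.inductionOn with
    | h z =>
      have hza : ¬ s z a := fun h => hq (Quotient.sound h)
      exact ⟨Quotient.mk _ z, by simp [g, hza]⟩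
  have hcompl := Set.ncard_add_ncard_compl {Quotient.mk s a}
  have hle := (Set.ncard_le_ncard hrange).trans
    ((Nat.card_coe_set_eq _).symm.trans_le (Finite.card_range_le (Quotient.lift g hker)))
  rw [Set.ncard_singleton] at hcompl
  rw [nblocks, nblocks]
  omega

/-! ### Partitions glued along a common subset -/

def SupportedOn (s : Setoid V) (R : Set V) : Prop :=
  ∀ ⦃x y⦄, s x y → x ∉ R → x = y

theorem SupportedOn.mem_of_ne {s : Setoid V} {R : Set V} (hs : s.SupportedOn R) {x y : V}
    (h : s x y) (hxy : x ≠ y) : x ∈ R ∧ y ∈ R :=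
  ⟨by_contra fun hx => hxy (hs h hx), by_contra fun hy => hxy (hs (s.symm h) hy).symm⟩

theorem SupportedOn.univ (s : Setoid V) : s.SupportedOn Set.univ :=
  fun _ _ _ hx => absurd trivial hx

theorem supportedOn_map {f : W → V} (hf : Function.Injective f) (s : Setoid W) :
    (s.map f).SupportedOn (Set.range f) := by
  intro x y h hx
  rw [coe_map_of_ker_le s f (ker_eq_bot_iff.2 hf ▸ bot_le)] at h
  rcases h with ⟨a, b, -, rfl, -⟩ | h
  · exact absurd ⟨a, rfl⟩ hx
  · exact h

theorem supportedOn_extendSetoid (U : Set V) (C : Setoid U) : (extendSetoid U C).SupportedOn U :=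
  fun _ _ h hx => h.resolve_right fun ⟨hx', _, _⟩ => hx hx'

theorem comap_val_extendSetoid (U : Set V) (C : Setoid U) : comap (↑) (extendSetoid U C) = C :=
  Setoid.ext fun u w => by
    refine ⟨?_, fun h => Or.inr ⟨u.2, w.2, h⟩⟩
    rintro (h | ⟨_, _, h⟩)
    · exact Subtype.ext h ▸ C.refl u
    · exact h

def classesIn (s : Setoid V) (X : Set V) : Set (Quotient s) :=
  {q | ∀ z, Quotient.mk s z = q → z ∈ X}

variable {s t : Setoid V} {U X X' : Set V}

theorem mk_mem_classesIn {x : V} : Quotient.mk s x ∈ s.classesIn X ↔ ∀ z, s x z → z ∈ X :=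
  ⟨fun h z hz => h z (Quotient.sound (s.symm hz)), fun h z hz => h z (s.symm (Quotient.exact hz))⟩

theorem classesIn_mono (h : X ⊆ X') : s.classesIn X ⊆ s.classesIn X' :=
  fun _ hq z hz => h (hq z hz)

theorem disjoint_classesIn (h : Disjoint X X') : Disjoint (s.classesIn X) (s.classesIn X') :=
  Set.disjoint_left.2 fun q h₁ h₂ => q.inductionOn (fun x h₁ h₂ =>
    Set.disjoint_left.1 h (h₁ x rfl) (h₂ x rfl)) h₁ h₂

theorem classesIn_empty : s.classesIn ∅ = ∅ :=
  Set.eq_empty_of_forall_notMem fun q => q.inductionOn fun x h => h x rfl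

theorem ncard_classesIn_of_le (h : s ≤ t)
    (hst : ∀ x y, (∀ z, s x z → z ∈ X) → t x y → s x y) :
    (t.classesIn X).ncard = (s.classesIn X).ncard := by
  have himage : map_of_le h '' s.classesIn X = t.classesIn X := by
    ext q
    induction q using Quotient.inductionOn with
    | h x =>
      constructor
      · rintro ⟨p, hp, hpq⟩
        induction p using Quotient.inductionOn with
        | h y =>
          rw [mk_mem_classesIn] at hp
          rw [← hpq]
          exact mk_mem_classesIn.2 fun z hz => hp z (hst y z hp hz)
      · intro hq
        exact ⟨Quotient.mk s x, mk_mem_classesIn.2 fun z hz => mk_mem_classesIn.1 hq z (h hz), rfl⟩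
  have hinj : Set.InjOn (map_of_le h) (s.classesIn X) := by
    intro p hp p' _ hpp'
    induction p using Quotient.inductionOn with
    | h x =>
      induction p' using Quotient.inductionOn with
      | h y => exact Quotient.sound (hst x y (mk_mem_classesIn.1 hp) (Quotient.exact hpp'))
  rw [← himage, hinj.ncard_image]

/-- The classes meeting `U` are the classes of the restriction of `s` to `U`. -/
theorem ncard_classesIn_compl_add_nblocks_comap [Finite V] (s : Setoid V) (U : Set V) :
    (s.classesIn Uᶜ).ncard + nblocks (comap ((↑) : U → V) s) = nblocks s := by
  have hcompl : s.classesIn Uᶜ = (Set.range (Quotient.mk'' ∘ ((↑) : U → V)))ᶜ := by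
    ext q
    induction q using Quotient.inductionOn with
    | h x =>
      simp only [mk_mem_classesIn, Set.mem_compl_iff, Set.mem_range, Function.comp_apply,
        Subtype.exists, not_exists]
      exact ⟨fun h u hu hux => h u (s.symm (Quotient.exact hux)) hu,
        fun h z hz hzU => h z hzU (Quotient.sound (s.symm hz))⟩
  rw [hcompl, nblocks, Nat.card_congr (comapQuotientEquiv _ s), Nat.card_coe_set_eq, add_comm,
    Set.ncard_add_ncard_compl, nblocks]

theorem nblocks_comap_val_le [Finite V] (s : Setoid V) (U : Set V) :
    nblocks (comap ((↑) : U → V) s) ≤ nblocks s :=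
  (ncard_classesIn_compl_add_nblocks_comap s U).symm ▸ Nat.le_add_left _ _

/-- Outside `R` the classes are singletons. -/
theorem SupportedOn.ncard_classesIn_compl [Finite V] {R : Set V} (hs : s.SupportedOn R)
    (hUR : U ⊆ R) : (s.classesIn Uᶜ).ncard = (s.classesIn (R \ U)).ncard + Rᶜ.ncard := by
  have hsplit : s.classesIn Uᶜ = s.classesIn (R \ U) ∪ Quotient.mk s '' Rᶜ := by
    ext q
    induction q using Quotient.inductionOn with
    | h x =>
      simp only [Set.mem_union, mk_mem_classesIn, Set.mem_image, Set.mem_compl_iff,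
        Set.mem_sdiff]
      constructor
      · intro h
        by_cases hx : x ∈ R
        · exact Or.inl fun z hz => ⟨by_contra fun hz' => hz' (hs (s.symm hz) hz' ▸ hx), h z hz⟩
        · exact Or.inr ⟨x, hx, rfl⟩
      · rintro (h | ⟨y, hy, hyx⟩) z hz
        · exact (h z hz).2
        · have : y = z := hs (s.trans (Quotient.exact hyx) hz) hy
          exact fun hzU => hy (this ▸ hUR hzU)
  have hdisj : Disjoint (s.classesIn (R \ U)) (Quotient.mk s '' Rᶜ) :=
    Set.disjoint_left.2 fun q hq ⟨y, hy, hyq⟩ => hy (hq y hyq).1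
  have hinj : Set.InjOn (Quotient.mk s) Rᶜ := fun x hx _ _ hxy => hs (Quotient.exact hxy) hx
  rw [hsplit, Set.ncard_union_eq hdisj, hinj.ncard_image]

theorem nblocks_map [Finite V] {f : W → V} (hf : Function.Injective f) (s : Setoid W) :
    nblocks (s.map f) = nblocks s + (Set.range f)ᶜ.ncard := by
  have h := ncard_classesIn_compl_add_nblocks_comap (s.map f) (Set.range f)
  rw [(supportedOn_map hf s).ncard_classesIn_compl subset_rfl, Set.sdiff_self, classesIn_empty,
    Set.ncard_empty, zero_add] at h
  have hcomap : nblocks (comap ((↑) : Set.range f → V) (s.map f)) = nblocks s := by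
    rw [← nblocks_comap_of_surjective (Equiv.ofInjective f hf).surjective]
    exact congrArg nblocks (comap_map_eq f s hf)
  omega

theorem nblocks_extendSetoid [Finite V] (U : Set V) (C : Setoid U) :
    nblocks (extendSetoid U C) + U.ncard = Nat.card V + nblocks C := by
  have h := ncard_classesIn_compl_add_nblocks_comap (extendSetoid U C) U
  rw [(supportedOn_extendSetoid U C).ncard_classesIn_compl subset_rfl, Set.sdiff_self,
    classesIn_empty, Set.ncard_empty, zero_add, comap_val_extendSetoid] at h
  have := Set.ncard_add_ncard_compl U
  omega

section Gluing

variable {s₁ s₂ : Setoid V} {R₁ R₂ : Set V}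

/-- `s₂` is trivial on `R₁ \ U`, so it cannot enlarge an `s₁`-class lying there. -/
theorem rel_of_sup_rel (hs₂ : s₂.SupportedOn R₂) (hR : R₁ ∩ R₂ ⊆ U) {x y : V}
    (hx : ∀ z, s₁ x z → z ∈ R₁ \ U) (h : (s₁ ⊔ s₂) x y) : s₁ x y := by
  have hker : s₁ ⊔ s₂ ≤ ker (s₁ x) := by
    refine sup_le (fun a b hab => propext ⟨fun h => s₁.trans h hab,
      fun h => s₁.trans h (s₁.symm hab)⟩) fun a b hab => ?_
    by_cases hne : a = b
    · rw [hne]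
    obtain ⟨ha, hb⟩ := hs₂.mem_of_ne hab hne
    have hnot : ∀ c ∈ R₂, ¬ s₁ x c := fun c hc hxc => (hx c hxc).2 (hR ⟨(hx c hxc).1, hc⟩)
    exact propext ⟨fun h => absurd h (hnot a ha), fun h => absurd h (hnot b hb)⟩
  have : s₁ x x = s₁ x y := hker h
  exact this ▸ s₁.refl x

theorem forall_mem_sdiff_of_sup (hs₁ : s₁.SupportedOn R₁) (hs₂ : s₂.SupportedOn R₂)
    (hR : R₁ ∩ R₂ ⊆ U) {x : V} (hx : x ∈ R₁) (hxU : ∀ z, (s₁ ⊔ s₂) x z → z ∉ U) :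
    ∀ z, (s₁ ⊔ s₂) x z → z ∈ R₁ \ U := by
  have hx₁ : ∀ z, s₁ x z → z ∈ R₁ \ U := fun z hz =>
    ⟨by_contra fun hz' => hz' (hs₁ (s₁.symm hz) hz' ▸ hx), hxU z (le_sup_left (a := s₁) hz)⟩
  exact fun z hz => hx₁ z (rel_of_sup_rel hs₂ hR hx₁ hz)

theorem exists_rel_of_rel (hs₁ : s₁.SupportedOn R₁) (hs₂ : s₂.SupportedOn R₂)
    (hR : R₁ ∩ R₂ ⊆ U) {M : Setoid U} (hM : comap (↑) s₂ ≤ M) {u : U} {a b : V} (hab : s₁ a b) :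
    (∃ w : U, M u w ∧ (s₁ a w ∨ s₂ a w)) → ∃ w : U, M u w ∧ (s₁ b w ∨ s₂ b w) := by
  rintro ⟨w, hw, h | h⟩
  · exact ⟨w, hw, Or.inl (s₁.trans (s₁.symm hab) h)⟩
  by_cases hab' : a = b
  · exact ⟨w, hw, Or.inr (hab' ▸ h)⟩
  by_cases haw : a = w
  · exact ⟨w, hw, Or.inl (haw ▸ s₁.symm hab)⟩
  have haU : a ∈ U := hR ⟨(hs₁.mem_of_ne hab hab').1, (hs₂.mem_of_ne h haw).1⟩
  exact ⟨⟨a, haU⟩, M.trans hw (hM (s₂.symm h)), Or.inl (s₁.symm hab)⟩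

theorem comap_val_sup (hs₁ : s₁.SupportedOn R₁) (hs₂ : s₂.SupportedOn R₂) (hR : R₁ ∩ R₂ ⊆ U) :
    comap ((↑) : U → V) (s₁ ⊔ s₂) = comap (↑) s₁ ⊔ comap (↑) s₂ := by
  refine le_antisymm (fun u v huv => ?_)
    (sup_le (fun _ _ h => (le_sup_left : s₁ ≤ s₁ ⊔ s₂) h)
      fun _ _ h => (le_sup_right : s₂ ≤ s₁ ⊔ s₂) h)
  set M := comap ((↑) : U → V) s₁ ⊔ comap (↑) s₂
  let p : V → Prop := fun z => ∃ w : U, M u w ∧ (s₁ z w ∨ s₂ z w)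
  have step₁ : ∀ a b, s₁ a b → p a → p b := fun a b hab =>
    exists_rel_of_rel hs₁ hs₂ hR le_sup_right hab
  have step₂ : ∀ a b, s₂ a b → p a → p b := fun a b hab h =>
    (exists_rel_of_rel (M := M) hs₂ hs₁ (fun x hx => hR ⟨hx.2, hx.1⟩) le_sup_left hab
      (h.imp fun _ => And.imp_right Or.symm)).imp fun _ => And.imp_right Or.symm
  have hker : s₁ ⊔ s₂ ≤ ker p :=
    sup_le (fun a b h => propext ⟨step₁ a b h, step₁ b a (s₁.symm h)⟩)
      fun a b h => propext ⟨step₂ a b h, step₂ b a (s₂.symm h)⟩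
  obtain ⟨w, hw, h⟩ : p v := (hker huv : p u = p v) ▸ ⟨u, M.refl u, Or.inl (s₁.refl _)⟩
  exact M.trans hw (M.symm (h.elim (fun h => (le_sup_left : comap (↑) s₁ ≤ M) h)
    fun h => (le_sup_right : comap (↑) s₂ ≤ M) h))

/-- A class of `s₁ ⊔ s₂` avoiding `U` is a class of `s₁` inside `R₁ \ U` or of `s₂` inside
`R₂ \ U`; the classes meeting `U` are the blocks of the join of the restrictions to `U`. -/
theorem nblocks_sup_add [Finite V] (hs₁ : s₁.SupportedOn R₁) (hs₂ : s₂.SupportedOn R₂)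
    (hU : R₁ ∩ R₂ = U) (hR : R₁ ∪ R₂ = Set.univ) :
    nblocks (s₁ ⊔ s₂) + nblocks (comap ((↑) : U → V) s₁) + nblocks (comap ((↑) : U → V) s₂) +
        R₁ᶜ.ncard + R₂ᶜ.ncard =
      nblocks s₁ + nblocks s₂ + nblocks (comap ((↑) : U → V) s₁ ⊔ comap (↑) s₂) := by
  have hs₂₁ : ∀ x y, (∀ z, s₂ x z → z ∈ R₂ \ U) → (s₁ ⊔ s₂) x y → s₂ x y := fun x y hx h =>
    rel_of_sup_rel hs₁ (fun z hz => hU ▸ ⟨hz.2, hz.1⟩) hx (by rwa [sup_comm])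
  have hsplit : (s₁ ⊔ s₂).classesIn Uᶜ =
      (s₁ ⊔ s₂).classesIn (R₁ \ U) ∪ (s₁ ⊔ s₂).classesIn (R₂ \ U) := by
    refine subset_antisymm (fun q => q.inductionOn fun x hq => ?_)
      (Set.union_subset (classesIn_mono fun _ h => h.2) (classesIn_mono fun _ h => h.2))
    rw [mk_mem_classesIn] at hq
    rcases (hR.symm ▸ Set.mem_univ x : x ∈ R₁ ∪ R₂) with hx | hx
    · exact Or.inl (mk_mem_classesIn.2 (forall_mem_sdiff_of_sup hs₁ hs₂ hU.le hx hq))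
    · refine Or.inr (mk_mem_classesIn.2 fun z hz => ?_)
      refine forall_mem_sdiff_of_sup hs₂ hs₁ (by rw [Set.inter_comm]; exact hU.le) hx
        (fun z hz => hq z (by rwa [sup_comm])) z (by rwa [sup_comm])
  have hdisj : Disjoint (R₁ \ U) (R₂ \ U) :=
    Set.disjoint_left.2 fun x h₁ h₂ => h₁.2 (hU ▸ ⟨h₁.1, h₂.1⟩)
  have h₁₂ := ncard_classesIn_compl_add_nblocks_comap (s₁ ⊔ s₂) U
  have h₁ := ncard_classesIn_compl_add_nblocks_comap s₁ U
  have h₂ := ncard_classesIn_compl_add_nblocks_comap s₂ U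
  rw [hs₁.ncard_classesIn_compl (hU ▸ Set.inter_subset_left)] at h₁
  rw [hs₂.ncard_classesIn_compl (hU ▸ Set.inter_subset_right)] at h₂
  rw [hsplit, Set.ncard_union_eq (disjoint_classesIn hdisj),
    ncard_classesIn_of_le (t := s₁ ⊔ s₂) le_sup_left fun x y hx h => rel_of_sup_rel hs₂ hU.le hx h,
    ncard_classesIn_of_le (t := s₁ ⊔ s₂) le_sup_right hs₂₁, comap_val_sup hs₁ hs₂ hU.le] at h₁₂
  omega

end Gluing

end Setoid

/-! ### Components of multigraphs -/

namespace Multigraph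

variable (G : Multigraph)

def components (S : Finset G.E) : Setoid G.V :=
  Relation.EqvGen.setoid (G.rel S)

theorem omega_eq_nblocks (S : Finset G.E) : G.omega S = nblocks (G.components S) := rfl

theorem part_eq_comap (U : Set G.V) (S : Finset G.E) :
    G.part U S = Setoid.comap (↑) (G.components S) := rfl

theorem components_union (S T : Finset G.E) :
    G.components (S ∪ T) = G.components S ⊔ G.components T := by
  have : G.rel (S ∪ T) = G.rel S ⊔ G.rel T := by
    ext v w
    simp only [rel, Finset.mem_union, Pi.sup_apply, sup_Prop_eq, or_and_right, exists_or]
  rw [components, this]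
  exact Setoid.gi.gc.l_sup

theorem rel_map {K : Multigraph} (φ : K.E ↪ G.E) (f : K.V → G.V)
    (hφ : ∀ e, G.ends (φ e) = (K.ends e).map f) (S : Finset K.E) :
    G.rel (S.map φ) = Relation.Map (K.rel S) f f := by
  ext v w
  constructor
  · rintro ⟨_, hg, hend⟩
    obtain ⟨e, he, rfl⟩ := Finset.mem_map.1 hg
    obtain ⟨a, b, hab, rfl, rfl⟩ := (Sym2.map_eq_mk_iff _ _ _ _).1 (hφ e ▸ hend)
    exact ⟨a, b, ⟨e, he, hab⟩, rfl, rfl⟩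
  · rintro ⟨a, b, ⟨e, he, hab⟩, rfl, rfl⟩
    exact ⟨φ e, Finset.mem_map_of_mem φ he, by rw [hφ, hab, Sym2.map_mk]⟩

theorem components_map {K : Multigraph} (φ : K.E ↪ G.E) (f : K.V → G.V)
    (hφ : ∀ e, G.ends (φ e) = (K.ends e).map f) (S : Finset K.E) :
    G.components (S.map φ) = (K.components S).map f := by
  rw [components, rel_map G φ f hφ, Setoid.eqvGen_map]
  rfl

theorem omegaG_le_omega (S : Finset G.E) : G.omegaG ≤ G.omega S :=
  Setoid.nblocks_le_of_le (Setoid.eqvGen_mono fun _ _ ⟨e, _, h⟩ => ⟨e, Finset.mem_univ e, h⟩)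

theorem omega_le_omega_insert_add_one (e : G.E) (S : Finset G.E) :
    G.omega S ≤ G.omega (insert e S) + 1 := by
  obtain ⟨a, b, hab⟩ : ∃ a b, G.ends e = s(a, b) := Sym2.ind (fun a b => ⟨a, b, rfl⟩) (G.ends e)
  rw [Finset.insert_eq, Finset.union_comm, omega_eq_nblocks, omega_eq_nblocks, components_union]
  refine Setoid.nblocks_le_nblocks_sup_add_one (a := a) (b := b) _ fun v w ⟨g, hg, h⟩ => ?_
  rw [Finset.mem_singleton.1 hg] at h
  exact h.symm.trans hab

theorem card_V_le_omega_add_card (S : Finset G.E) : Fintype.card G.V ≤ G.omega S + S.card := by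
  induction S using Finset.induction_on with
  | empty =>
    have hbot : G.components ∅ = ⊥ :=
      le_bot_iff.1 (Setoid.eqvGen_le fun _ _ ⟨e, he, _⟩ => absurd he (Finset.notMem_empty e))
    rw [omega_eq_nblocks, hbot, nblocks, Nat.card_congr Setoid.quotientBotEquiv,
      Nat.card_eq_fintype_card, Finset.card_empty, add_zero]
  | insert e S he ih =>
    have := G.omega_le_omega_insert_add_one e S
    rw [Finset.card_insert_of_notMem he]
    omega

theorem negami_eq_tutte (x y : ℝ) :
    G.negami ((x - 1) * (y - 1)) (y - 1) 1 =
      (x - 1) ^ G.omegaG * (y - 1) ^ Fintype.card G.V * G.tutte x y := by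
  rw [negami, tutte, Finset.mul_sum]
  refine Finset.sum_congr rfl fun S _ => ?_
  rw [one_pow, mul_one, mul_pow, mul_assoc, ← pow_add,
    ← pow_sub_mul_pow (x - 1) (G.omegaG_le_omega S),
    ← pow_sub_mul_pow (y - 1) (G.card_V_le_omega_add_card S)]
  ring

/-! ### Contractions -/

section Contraction

variable (K : Multigraph) {U : Set K.V} (C : Setoid U)

theorem components_contract (S : Finset K.E) :
    (K.contract C).components S = (K.components S).map (Quotient.mk (extendSetoid U C)) := by
  have h := (K.contract C).components_map (Function.Embedding.refl K.E) _ (fun _ => rfl) S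
  exact (congrArg (K.contract C).components (Finset.map_refl (s := S)).symm).trans h

theorem omega_contract (S : Finset K.E) :
    (K.contract C).omega S = K.omega S - nblocks (K.part U S) + nblocks (K.part U S ⊔ C) := by
  have hglue := Setoid.nblocks_sup_add (Setoid.SupportedOn.univ (K.components S))
    (Setoid.supportedOn_extendSetoid U C) (Set.univ_inter U) (Set.univ_union U)
  rw [Setoid.comap_val_extendSetoid, Set.compl_univ, Set.ncard_empty] at hglue
  have hext := Setoid.nblocks_extendSetoid U C
  have hcompl := Set.ncard_add_ncard_compl U
  have hle := Setoid.nblocks_comap_val_le (K.components S) U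
  have hcontract : (K.contract C).omega S = nblocks (K.components S ⊔ extendSetoid U C) :=
    (congrArg nblocks (components_contract K C S)).trans (Setoid.nblocks_map_mk _ _)
  rw [hcontract, part_eq_comap, omega_eq_nblocks]
  omega

theorem card_V_contract :
    Fintype.card (K.contract C).V + U.ncard = Fintype.card K.V + nblocks C := by
  rw [← Nat.card_eq_fintype_card, ← Nat.card_eq_fintype_card]
  exact Setoid.nblocks_extendSetoid U C

theorem negami_contract (t x y : ℝ) :
    (K.contract C).negami t x y = ∑ A : Setoid U, t ^ nblocks (A ⊔ C) * K.negamiAux U A t x y := by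
  calc (K.contract C).negami t x y
      = ∑ S : Finset K.E,
          t ^ (K.contract C).omega S * x ^ S.card * y ^ (Fintype.card K.E - S.card) := rfl
    _ = ∑ S, t ^ nblocks (K.part U S ⊔ C) *
          (t ^ (K.omega S - nblocks (K.part U S)) * x ^ S.card * y ^ (Fintype.card K.E - S.card)) :=
        Finset.sum_congr rfl fun S _ => by rw [omega_contract K C S, pow_add]; ring
    _ = _ := Finset.sum_mul_eq_sum_fiberwise (K.part U) (fun A => t ^ nblocks (A ⊔ C))
        fun A S => t ^ (K.omega S - nblocks A) * x ^ S.card * y ^ (Fintype.card K.E - S.card)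

end Contraction

section Embedded

variable (K : Multigraph) {V : Type} (U : Set V) {ι : K.V → V}

/-- The partition of `U` induced by `S` when `K` is placed inside `V` along `ι`. -/
def partVia (ι : K.V → V) (S : Finset K.E) : Setoid U :=
  Setoid.comap (↑) ((K.components S).map ι)

variable {U}

theorem comap_restrictPreimage_partVia (hι : Function.Injective ι) (S : Finset K.E) :
    Setoid.comap (U.restrictPreimage ι) (K.partVia U ι S) = K.part (ι ⁻¹' U) S :=
  congrArg (Setoid.comap ((↑) : ι ⁻¹' U → K.V)) (Setoid.comap_map_eq ι _ hι)

theorem nblocks_partVia_le_omega (hι : Function.Injective ι)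
    (hr : Function.Bijective (U.restrictPreimage ι)) (S : Finset K.E) :
    nblocks (K.partVia U ι S) ≤ K.omega S := by
  rw [← Setoid.nblocks_comap_of_surjective hr.2, K.comap_restrictPreimage_partVia hι]
  exact Setoid.nblocks_comap_val_le _ _

theorem negamiAux_comap_restrictPreimage (hι : Function.Injective ι)
    (hr : Function.Bijective (U.restrictPreimage ι)) (A : Setoid U) (t x y : ℝ) :
    K.negamiAux (ι ⁻¹' U) (Setoid.comap (U.restrictPreimage ι) A) t x y =
      ∑ S, if K.partVia U ι S = A then
        t ^ (K.omega S - nblocks A) * x ^ S.card * y ^ (Fintype.card K.E - S.card) else 0 := by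
  refine Finset.sum_congr rfl fun S _ => ?_
  rw [← K.comap_restrictPreimage_partVia hι S, (Setoid.comap_injective _ hr.2).eq_iff]
  have hA : Nat.card (Quotient (Setoid.comap (U.restrictPreimage ι) A)) = nblocks A :=
    Setoid.nblocks_comap_of_surjective hr.2 A
  rw [hA]

theorem negami_contract_comap_restrictPreimage [Finite V]
    (hr : Function.Bijective (U.restrictPreimage ι)) (C : Setoid U) (t x y : ℝ) :
    (K.contract (Setoid.comap (U.restrictPreimage ι) C)).negami t x y =
      ∑ A, t ^ nblocks (A ⊔ C) *
        K.negamiAux (ι ⁻¹' U) (Setoid.comap (U.restrictPreimage ι) A) t x y := by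
  let e := Setoid.comapOrderIso (Equiv.ofBijective _ hr)
  rw [negami_contract, ← e.toEquiv.sum_comp]
  refine Finset.sum_congr rfl fun A _ => ?_
  have hsup : nblocks (e A ⊔ e C) = nblocks (A ⊔ C) := by
    rw [← e.map_sup]
    exact Setoid.nblocks_comap_of_surjective hr.2 _
  exact congrArg (· * _) (congrArg (t ^ ·) hsup)

theorem card_V_contract_comap_restrictPreimage
    (hr : Function.Bijective (U.restrictPreimage ι)) (C : Setoid U) :
    Fintype.card (K.contract (Setoid.comap (U.restrictPreimage ι) C)).V + U.ncard =
      Fintype.card K.V + nblocks C := by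
  have h := K.card_V_contract (Setoid.comap (U.restrictPreimage ι) C)
  rwa [Setoid.nblocks_comap_of_surjective hr.2, ← Nat.card_coe_set_eq,
    Nat.card_congr (Equiv.ofBijective _ hr), Nat.card_coe_set_eq] at h

end Embedded

end Multigraph

/-! ### `n`-sums -/

namespace NSum

open Multigraph

variable {G K H : Multigraph} {U : Set G.V} (sg : NSum G K H U)

theorem bijective_restrictPreimage_ιK : Function.Bijective (U.restrictPreimage sg.ιK) :=
  Set.restrictPreimage_bijective_of_subset_range sg.injK (sg.inter.ge.trans Set.inter_subset_left)

theorem bijective_restrictPreimage_ιH : Function.Bijective (U.restrictPreimage sg.ιH) :=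
  Set.restrictPreimage_bijective_of_subset_range sg.injH (sg.inter.ge.trans Set.inter_subset_right)

theorem card_V (sg : NSum G K H U) :
    Fintype.card G.V + U.ncard = Fintype.card K.V + Fintype.card H.V := by
  have h := Set.ncard_union_add_ncard_inter (Set.range sg.ιK) (Set.range sg.ιH)
  rw [sg.cover, sg.inter, Set.ncard_univ, Set.ncard_range_of_injective sg.injK,
    Set.ncard_range_of_injective sg.injH] at h
  simpa only [Nat.card_eq_fintype_card] using h

theorem card_E (sg : NSum G K H U) : Fintype.card G.E = Fintype.card K.E + Fintype.card H.E := by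
  rw [Fintype.card_congr sg.edgeEquiv, Fintype.card_sum]

def edgeSets : Finset K.E × Finset H.E ≃ Finset G.E :=
  Finset.sumEquiv.symm.toEquiv.trans sg.edgeEquiv.symm.finsetCongr

theorem edgeSets_apply (P : Finset K.E) (Q : Finset H.E) :
    sg.edgeSets (P, Q) =
      P.map (Function.Embedding.inl.trans sg.edgeEquiv.symm.toEmbedding) ∪
        Q.map (Function.Embedding.inr.trans sg.edgeEquiv.symm.toEmbedding) := by
  simp [edgeSets, Equiv.finsetCongr_apply, Finset.map_disjSum, Finset.disjUnion_eq_union]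

theorem card_edgeSets (P : Finset K.E) (Q : Finset H.E) :
    (sg.edgeSets (P, Q)).card = P.card + Q.card := by
  simp [edgeSets, Equiv.finsetCongr_apply]

theorem omega_edgeSets (P : Finset K.E) (Q : Finset H.E) :
    G.omega (sg.edgeSets (P, Q)) =
      K.omega P - nblocks (K.partVia U sg.ιK P) + (H.omega Q - nblocks (H.partVia U sg.ιH Q)) +
        nblocks (K.partVia U sg.ιK P ⊔ H.partVia U sg.ιH Q) := by
  have hcomp : G.components (sg.edgeSets (P, Q)) =
      (K.components P).map sg.ιK ⊔ (H.components Q).map sg.ιH := by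
    rw [edgeSets_apply, components_union, G.components_map _ _ sg.endsK,
      G.components_map _ _ sg.endsH]
  have hglue := Setoid.nblocks_sup_add (Setoid.supportedOn_map sg.injK (K.components P))
    (Setoid.supportedOn_map sg.injH (H.components Q)) sg.inter sg.cover
  rw [Setoid.nblocks_map sg.injK, Setoid.nblocks_map sg.injH] at hglue
  have hK := K.nblocks_partVia_le_omega sg.injK sg.bijective_restrictPreimage_ιK P
  have hH := H.nblocks_partVia_le_omega sg.injH sg.bijective_restrictPreimage_ιH Q
  simp only [partVia, omega_eq_nblocks] at hK hH ⊢
  rw [hcomp]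
  omega

theorem negamiAux_pullK (A : Setoid U) (t x y : ℝ) :
    K.negamiAux (sg.ιK ⁻¹' U) (sg.pullK A) t x y =
      ∑ P, if K.partVia U sg.ιK P = A then
        t ^ (K.omega P - nblocks A) * x ^ P.card * y ^ (Fintype.card K.E - P.card) else 0 :=
  K.negamiAux_comap_restrictPreimage sg.injK sg.bijective_restrictPreimage_ιK A t x y

theorem negamiAux_pullH (B : Setoid U) (t x y : ℝ) :
    H.negamiAux (sg.ιH ⁻¹' U) (sg.pullH B) t x y =
      ∑ Q, if H.partVia U sg.ιH Q = B then
        t ^ (H.omega Q - nblocks B) * x ^ Q.card * y ^ (Fintype.card H.E - Q.card) else 0 :=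
  H.negamiAux_comap_restrictPreimage sg.injH sg.bijective_restrictPreimage_ιH B t x y

theorem negami_contractK (C : Setoid U) (t x y : ℝ) :
    (sg.contractK C).negami t x y =
      ∑ A, t ^ nblocks (A ⊔ C) * K.negamiAux (sg.ιK ⁻¹' U) (sg.pullK A) t x y :=
  K.negami_contract_comap_restrictPreimage sg.bijective_restrictPreimage_ιK C t x y

theorem negami_contractH (D : Setoid U) (t x y : ℝ) :
    (sg.contractH D).negami t x y =
      ∑ B, t ^ nblocks (B ⊔ D) * H.negamiAux (sg.ιH ⁻¹' U) (sg.pullH B) t x y :=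
  H.negami_contract_comap_restrictPreimage sg.bijective_restrictPreimage_ιH D t x y

theorem card_V_contractK (C : Setoid U) :
    Fintype.card (sg.contractK C).V + U.ncard = Fintype.card K.V + nblocks C :=
  K.card_V_contract_comap_restrictPreimage sg.bijective_restrictPreimage_ιK C

theorem card_V_contractH (D : Setoid U) :
    Fintype.card (sg.contractH D).V + U.ncard = Fintype.card H.V + nblocks D :=
  H.card_V_contract_comap_restrictPreimage sg.bijective_restrictPreimage_ιH D

theorem negami_eq_sum_negamiAux (t x y : ℝ) :
    G.negami t x y = ∑ A, ∑ B, t ^ nblocks (A ⊔ B) *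
      (K.negamiAux (sg.ιK ⁻¹' U) (sg.pullK A) t x y *
        H.negamiAux (sg.ιH ⁻¹' U) (sg.pullH B) t x y) := by
  let a : Finset K.E → Setoid U := K.partVia U sg.ιK
  let b : Finset H.E → Setoid U := H.partVia U sg.ιH
  let f : Setoid U → Finset K.E → ℝ := fun A P =>
    t ^ (K.omega P - nblocks A) * x ^ P.card * y ^ (Fintype.card K.E - P.card)
  let g : Setoid U → Finset H.E → ℝ := fun B Q =>
    t ^ (H.omega Q - nblocks B) * x ^ Q.card * y ^ (Fintype.card H.E - Q.card)
  calc G.negami t x y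
      = ∑ PQ : Finset K.E × Finset H.E, t ^ G.omega (sg.edgeSets PQ) *
          x ^ (sg.edgeSets PQ).card * y ^ (Fintype.card G.E - (sg.edgeSets PQ).card) :=
        (sg.edgeSets.sum_comp _).symm
    _ = ∑ PQ : Finset K.E × Finset H.E, t ^ nblocks (a PQ.1 ⊔ b PQ.2) *
          (f (a PQ.1) PQ.1 * g (b PQ.2) PQ.2) := by
        refine Finset.sum_congr rfl fun ⟨P, Q⟩ _ => ?_
        have hP := P.card_le_univ
        have hQ := Q.card_le_univ
        rw [sg.omega_edgeSets, sg.card_edgeSets, sg.card_E,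
          show Fintype.card K.E + Fintype.card H.E - (P.card + Q.card) =
            (Fintype.card K.E - P.card) + (Fintype.card H.E - Q.card) by omega]
        simp only [a, b, f, g, pow_add]
        ring
    _ = ∑ AB : Setoid U × Setoid U, t ^ nblocks (AB.1 ⊔ AB.2) *
          ∑ PQ : Finset K.E × Finset H.E,
            if (a PQ.1, b PQ.2) = AB then f AB.1 PQ.1 * g AB.2 PQ.2 else 0 :=
        Finset.sum_mul_eq_sum_fiberwise (fun PQ : Finset K.E × Finset H.E => (a PQ.1, b PQ.2))
          (fun AB => t ^ nblocks (AB.1 ⊔ AB.2))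
          fun (AB : Setoid U × Setoid U) (PQ : Finset K.E × Finset H.E) => f AB.1 PQ.1 * g AB.2 PQ.2
    _ = _ := by
        rw [Fintype.sum_prod_type]
        refine Finset.sum_congr rfl fun A _ => Finset.sum_congr rfl fun B _ => ?_
        rw [negamiAux_pullK, negamiAux_pullH, Finset.sum_mul_sum, Fintype.sum_prod_type]
        simp only [Prod.mk.injEq, ite_zero_mul_ite_zero, a, b, f, g, ite_and]

open Matrix in
theorem negami_eq_sum_of_mul_mul_eq {t : ℝ} {B : Matrix (Setoid U) (Setoid U) ℝ}
    (hB : Tmat U t * B * Tmat U t = Tmat U t) (x y : ℝ) :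
    G.negami t x y =
      ∑ C, ∑ D, B C D * (sg.contractK C).negami t x y * (sg.contractH D).negami t x y := by
  let a : Setoid U → ℝ := fun A => K.negamiAux (sg.ιK ⁻¹' U) (sg.pullK A) t x y
  let b : Setoid U → ℝ := fun B => H.negamiAux (sg.ιH ⁻¹' U) (sg.pullH B) t x y
  have hG : G.negami t x y = a ⬝ᵥ (Tmat U t *ᵥ b) := by
    simp only [sg.negami_eq_sum_negamiAux, dotProduct, mulVec, Tmat, of_apply, Finset.mul_sum]
    exact Finset.sum_congr rfl fun A _ => Finset.sum_congr rfl fun B _ => by ring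
  have hK : ∀ C, (sg.contractK C).negami t x y = (a ᵥ* Tmat U t) C := fun C => by
    simp only [sg.negami_contractK, vecMul, dotProduct, Tmat, of_apply, a, mul_comm]
  have hH : ∀ D, (sg.contractH D).negami t x y = (Tmat U t *ᵥ b) D := fun D => by
    simp only [sg.negami_contractH, mulVec, dotProduct, Tmat, of_apply, b, sup_comm]
  rw [hG, dotProduct_mulVec_eq_sum_of_mul_mul_eq hB]
  simp only [hK, hH]

end NSum

theorem tutte_splitting_formula_general
    (G K H : Multigraph) (U : Set G.V) (n : ℕ)
    (sg : NSum G K H U) (hU : Nat.card ↥U = n) (x y : ℝ) (hx : x ≠ 1) (hy : y ≠ 1)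
    (B : Matrix (Setoid ↥U) (Setoid ↥U) ℝ)
    (hB : Tmat ↥U ((x - 1) * (y - 1)) * B * Tmat ↥U ((x - 1) * (y - 1)) =
      Tmat ↥U ((x - 1) * (y - 1))) :
    G.tutte x y =
      ∑ A : Setoid ↥U, ∑ B' : Setoid ↥U,
        (B A B' *
          (x - 1) ^ (((sg.contractK A).omegaG : ℤ) + ((sg.contractH B').omegaG : ℤ) - (G.omegaG : ℤ)) *
          (y - 1) ^ ((nblocks A : ℤ) + (nblocks B' : ℤ) - (n : ℤ))) *
          (sg.contractK A).tutte x y * (sg.contractH B').tutte x y := by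
  subst hU
  have hX : x - 1 ≠ 0 := sub_ne_zero.2 hx
  have hY : y - 1 ≠ 0 := sub_ne_zero.2 hy
  have hG := G.negami_eq_tutte x y
  rw [sg.negami_eq_sum_of_mul_mul_eq hB] at hG
  refine mul_left_cancel₀
    (mul_ne_zero (pow_ne_zero G.omegaG hX) (pow_ne_zero (Fintype.card G.V) hY)) ?_
  rw [← hG, Finset.mul_sum]
  refine Finset.sum_congr rfl fun C _ => ?_
  rw [Finset.mul_sum]
  refine Finset.sum_congr rfl fun D _ => ?_
  have hV : (nblocks C : ℤ) + nblocks D - Nat.card U =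
      Fintype.card (sg.contractK C).V + Fintype.card (sg.contractH D).V - Fintype.card G.V := by
    have := sg.card_V
    have := sg.card_V_contractK C
    have := sg.card_V_contractH D
    rw [Nat.card_coe_set_eq]
    omega
  rw [Multigraph.negami_eq_tutte, Multigraph.negami_eq_tutte, hV, zpow_sub₀ hX, zpow_add₀ hX,
    zpow_sub₀ hY, zpow_add₀ hY]
  simp only [zpow_natCast]
  field_simp

/-- Negami's splitting formula for the Tutte polynomial of an
`n`-sum in the region `x ≠ 1`, `y ≠ 1`. -/
theorem tutte_splitting_formula
    (G K H : Multigraph) (U : Set G.V) (n : ℕ) (hn : 1 ≤ n)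
    (sg : NSum G K H U) (hU : Nat.card ↥U = n) (x y : ℝ) (hx : x ≠ 1) (hy : y ≠ 1)
    (B : Matrix (Setoid ↥U) (Setoid ↥U) ℝ)
    (hB : Tmat ↥U ((x - 1) * (y - 1)) * B * Tmat ↥U ((x - 1) * (y - 1)) =
      Tmat ↥U ((x - 1) * (y - 1))) :
    G.tutte x y =
      ∑ A : Setoid ↥U, ∑ B' : Setoid ↥U,
        (B A B' *
          (x - 1) ^ (((sg.contractK A).omegaG : ℤ) + ((sg.contractH B').omegaG : ℤ) - (G.omegaG : ℤ)) *
          (y - 1) ^ ((nblocks A : ℤ) + (nblocks B' : ℤ) - (n : ℤ))) *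
          (sg.contractK A).tutte x y * (sg.contractH B').tutte x y :=
  tutte_splitting_formula_general G K H U n sg hU x y hx hy B hB
end

section
/- Let G be a connected multigraph and x a real number. For all sequences (t_k) and (ζ_k) of real numbers with ζ_k ≠ 0 for all k, t_k → 0, ζ_k → 0, and t_k/ζ_k → x−1, the sequence f(G;t_k,ζ_k,1) · ζ_k^{−|V(G)|} converges to (x−1) · T(G;x,1). -/
attribute [local instance] Classical.propDecidable

/-! Multiplying by `ζ ^ (-|V|)` turns the term of `S` in the Negami polynomial into
`(t/ζ)^ω(S) · ζ^(ω(S) + |S| - |V|)`, and the nullity `ω(S) + |S| - |V|` is a natural number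
because adding an edge lowers `ω` by at most one. As `ζ → 0` only the forests survive, each
contributing `(x-1)^ω(S)`, which is the term of `S` in `(x-1) · T(G;x,1)` when `ω(G) = 1`. -/

namespace Relation

variable {α : Type*} {r r' : α → α → Prop} {a b : α}

theorem EqvGen.eqvGen_or_both_near_pair (h : ∀ v w, r' v w → r v w ∨ s(v, w) = s(a, b))
    {v w : α} (hvw : EqvGen r' v w) :
    EqvGen r v w ∨ ((EqvGen r v a ∨ EqvGen r v b) ∧ (EqvGen r w a ∨ EqvGen r w b)) := by
  have near_pair_of_eqvGen {v w} (hvw : EqvGen r v w) : EqvGen r w a ∨ EqvGen r w b →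
      EqvGen r v a ∨ EqvGen r v b :=
    Or.imp (hvw.trans _ _ _) (hvw.trans _ _ _)
  induction hvw with
  | rel v w hvw =>
    rcases h v w hvw with hr | hab
    · exact .inl (.rel _ _ hr)
    · rcases Sym2.eq_iff.mp hab with ⟨rfl, rfl⟩ | ⟨rfl, rfl⟩
      · exact .inr ⟨.inl (.refl _), .inr (.refl _)⟩
      · exact .inr ⟨.inr (.refl _), .inl (.refl _)⟩
  | refl v => exact .inl (.refl v)
  | symm v w _ ih => exact ih.imp (·.symm) And.symm
  | trans v w u _ _ ih₁ ih₂ =>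
    rcases ih₁ with hvw | ⟨hv, hw⟩ <;> rcases ih₂ with hwu | ⟨hw', hu⟩
    · exact .inl (hvw.trans _ _ _ hwu)
    · exact .inr ⟨near_pair_of_eqvGen hvw hw', hu⟩
    · exact .inr ⟨hv, near_pair_of_eqvGen hwu.symm hw⟩
    · exact .inr ⟨hv, hu⟩

theorem card_quotient_eqvGen_le_add_one [Finite α] (hle : r ≤ r')
    (h : ∀ v w, r' v w → r v w ∨ s(v, w) = s(a, b)) :
    Nat.card (Quotient (EqvGen.setoid r)) ≤ Nat.card (Quotient (EqvGen.setoid r')) + 1 := by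
  classical
  let f : Quotient (EqvGen.setoid r) → Option (Quotient (EqvGen.setoid r')) :=
    Quotient.lift (fun v => if EqvGen r v a then none else some ⟦v⟧)
      fun v w (hvw : EqvGen r v w) => by
        by_cases hva : EqvGen r v a
        · rw [if_pos hva, if_pos (hvw.symm.trans _ _ _ hva)]
        · rw [if_neg hva, if_neg fun hwa => hva (hvw.trans _ _ _ hwa)]
          exact congrArg some (Quotient.sound (hvw.mono hle))
  -- injective because adding `a ~ b` merges only the classes of `a` and `b`
  have hf : Function.Injective f := by
    refine fun p q => Quotient.inductionOn₂ p q fun v w hvw => ?_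
    by_cases hva : EqvGen r v a <;> by_cases hwa : EqvGen r w a <;>
      simp only [f, Quotient.lift_mk, hva, hwa, if_true, if_false, reduceCtorEq,
        Option.some_inj] at hvw
    · exact Quotient.sound (hva.trans _ _ _ hwa.symm)
    · rcases (Quotient.exact hvw).eqvGen_or_both_near_pair h with hvw | ⟨hv, hw⟩
      · exact Quotient.sound hvw
      · exact Quotient.sound ((hv.resolve_left hva).trans _ _ _ (hw.resolve_left hwa).symm)
  calc _ ≤ Nat.card (Option (Quotient (EqvGen.setoid r'))) := Nat.card_le_card_of_injective f hf
    _ = _ := Finite.card_option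

end Relation

namespace Multigraph

variable (G : Multigraph)

theorem omega_empty : G.omega ∅ = Fintype.card G.V := by
  have hinj v w (hvw : Relation.EqvGen (G.rel ∅) v w) : v = w :=
    (Equivalence.eqvGen_iff eq_equivalence).mp
      (hvw.mono fun _ _ ⟨_, he, _⟩ => absurd he (Finset.notMem_empty _))
  have : G.V ≃ Quotient (Relation.EqvGen.setoid (G.rel ∅)) :=
    Equiv.ofBijective (Quotient.mk _)
      ⟨fun v w hvw => hinj v w (Quotient.exact hvw), Quotient.mk_surjective⟩
  rw [omega, ← Nat.card_congr this, Nat.card_eq_fintype_card]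

theorem one_le_omega_of_omegaG_eq_one (hG : G.omegaG = 1) (S : Finset G.E) : 1 ≤ G.omega S := by
  obtain ⟨v⟩ : Nonempty G.V := by
    obtain ⟨q⟩ := (Nat.card_pos_iff.mp (hG ▸ Nat.one_pos : 0 < G.omegaG)).1
    exact ⟨q.out⟩
  exact Nat.card_pos_iff.mpr ⟨⟨⟦v⟧⟩, inferInstance⟩

theorem negami_mul_zpow_neg_card {z : ℝ} (hz : z ≠ 0) (t y : ℝ) :
    G.negami t z y * z ^ (-(Fintype.card G.V : ℤ)) =
      ∑ S : Finset G.E, (t / z) ^ G.omega S * z ^ (G.omega S + S.card - Fintype.card G.V) *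
        y ^ (Fintype.card G.E - S.card) := by
  rw [negami, Finset.sum_mul]
  refine Finset.sum_congr rfl fun S _ => ?_
  obtain ⟨m, hm⟩ := Nat.exists_eq_add_of_le (G.card_V_le_omega_add_card S)
  rw [hm, Nat.add_sub_cancel_left, div_pow, zpow_neg, zpow_natCast]
  have hz_pow : z ^ S.card * z ^ G.omega S = z ^ Fintype.card G.V * z ^ m := by
    rw [← pow_add, ← pow_add, add_comm, hm]
  field_simp
  linear_combination (t ^ G.omega S * y ^ (Fintype.card G.E - S.card)) * hz_pow

theorem mul_tutte_of_omegaG_eq_one (hG : G.omegaG = 1) (x y : ℝ) :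
    (x - 1) * G.tutte x y =
      ∑ S : Finset G.E,
        (x - 1) ^ G.omega S * (y - 1) ^ (G.omega S + S.card - Fintype.card G.V) := by
  rw [tutte, Finset.mul_sum]
  refine Finset.sum_congr rfl fun S _ => ?_
  rw [hG, ← mul_assoc, ← pow_succ', Nat.sub_add_cancel (G.one_le_omega_of_omegaG_eq_one hG S)]

end Multigraph

theorem negami_limit_tutte_general
    (G : Multigraph) (hG : G.omegaG = 1) (x : ℝ)
    (t z : ℕ → ℝ) (hz : ∀ k, z k ≠ 0)
    (hz0 : Filter.Tendsto z Filter.atTop (nhds 0))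
    (hratio : Filter.Tendsto (fun k => t k / z k) Filter.atTop (nhds (x - 1))) :
    Filter.Tendsto
      (fun k => G.negami (t k) (z k) 1 * z k ^ (-(Fintype.card G.V : ℤ)))
      Filter.atTop (nhds ((x - 1) * G.tutte x 1)) := by
  simp only [G.negami_mul_zpow_neg_card (hz _), G.mul_tutte_of_omegaG_eq_one hG, one_pow,
    mul_one, sub_self]
  exact tendsto_finsetSum _ fun S _ => (hratio.pow _).mul (hz0.pow _)

/-- `f(G;t_k,ζ_k,1) · ζ_k^{−|V(G)|} → (x−1)·T(G;x,1)` whenever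
`t_k → 0`, `ζ_k → 0` (with `ζ_k ≠ 0`) and `t_k/ζ_k → x−1`. -/
theorem negami_limit_tutte
    (G : Multigraph) (hG : G.omegaG = 1) (x : ℝ)
    (t z : ℕ → ℝ) (hz : ∀ k, z k ≠ 0)
    (ht : Filter.Tendsto t Filter.atTop (nhds 0))
    (hz0 : Filter.Tendsto z Filter.atTop (nhds 0))
    (hratio : Filter.Tendsto (fun k => t k / z k) Filter.atTop (nhds (x - 1))) :
    Filter.Tendsto
      (fun k => G.negami (t k) (z k) 1 * z k ^ (-(Fintype.card G.V : ℤ)))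
      Filter.atTop (nhds ((x - 1) * G.tutte x 1)) :=
  negami_limit_tutte_general G hG x t z hz hz0 hratio
end

section
/- Let M be a symmetric square matrix with real entries (indexed by a nonempty finite type). The matrix equation M · X · M = M has a unique solution X if and only if M is invertible (in which case the unique solution is M⁻¹). -/
attribute [local instance] Classical.propDecidable

namespace Matrix

variable {n : Type*} [Fintype n] [DecidableEq n]

theorem mul_mul_eq_self_iff_eq_nonsing_inv {R : Type*} [CommRing R] {M : Matrix n n R}
    (hM : IsUnit M) (X : Matrix n n R) : M * X * M = M ↔ X = M⁻¹ := by
  have hdet : IsUnit M.det := (isUnit_iff_isUnit_det M).mp hM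
  constructor
  · intro h
    calc X = (M⁻¹ * M) * X * (M * M⁻¹) := by
          rw [nonsing_inv_mul _ hdet, mul_nonsing_inv _ hdet, Matrix.one_mul, Matrix.mul_one]
      _ = M⁻¹ * (M * X * M) * M⁻¹ := by noncomm_ring
      _ = M⁻¹ := by rw [h, nonsing_inv_mul _ hdet, Matrix.one_mul]
  · rintro rfl
    rw [mul_nonsing_inv _ hdet, Matrix.one_mul]

theorem exists_ne_zero_mul_eq_zero_of_not_isUnit {K : Type*} [Field K] {M : Matrix n n K}
    (hM : ¬IsUnit M) : ∃ Y : Matrix n n K, Y ≠ 0 ∧ M * Y = 0 := by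
  have hdet : M.det = 0 := by
    rwa [isUnit_iff_isUnit_det, isUnit_iff_ne_zero, not_not] at hM
  obtain ⟨v, hv, hMv⟩ := exists_mulVec_eq_zero_iff.mpr hdet
  exact ⟨vecMulVec v v, vecMulVec_ne_zero hv hv, by rw [mul_vecMulVec, hMv, zero_vecMulVec]⟩

/-- A right annihilator `Y` of a singular `M` turns any solution `X` into a second one, `X + Y`. -/
theorem isUnit_of_existsUnique_mul_mul_eq_self {K : Type*} [Field K] {M : Matrix n n K}
    (h : ∃! X : Matrix n n K, M * X * M = M) : IsUnit M := by
  obtain ⟨X, hX, huniq⟩ := h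
  by_contra hM
  obtain ⟨Y, hY, hMY⟩ := exists_ne_zero_mul_eq_zero_of_not_isUnit hM
  have hXY : M * (X + Y) * M = M := by rw [Matrix.mul_add, hMY, add_zero, hX]
  exact hY (by simpa using huniq _ hXY)

end Matrix

theorem symmetric_matrix_generalized_inverse_unique_iff_general
    {I : Type} [Fintype I] [DecidableEq I]
    (M : Matrix I I ℝ) :
    ((∃! X : Matrix I I ℝ, M * X * M = M) ↔ IsUnit M) ∧
    (IsUnit M → ∀ X : Matrix I I ℝ, M * X * M = M ↔ X = M⁻¹) :=
  ⟨⟨Matrix.isUnit_of_existsUnique_mul_mul_eq_self, fun hM =>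
      ⟨M⁻¹, (Matrix.mul_mul_eq_self_iff_eq_nonsing_inv hM _).mpr rfl,
        fun X hX => (Matrix.mul_mul_eq_self_iff_eq_nonsing_inv hM X).mp hX⟩⟩,
    Matrix.mul_mul_eq_self_iff_eq_nonsing_inv⟩

/-- for a real symmetric matrix `M` (nonempty index), the equation
`M·X·M = M` has a unique solution iff `M` is invertible, in which case the unique
solution is `M⁻¹`. -/
theorem symmetric_matrix_generalized_inverse_unique_iff
    {I : Type} [Fintype I] [DecidableEq I] [Nonempty I]
    (M : Matrix I I ℝ) (hM : M.transpose = M) :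
    ((∃! X : Matrix I I ℝ, M * X * M = M) ↔ IsUnit M) ∧
    (IsUnit M → ∀ X : Matrix I I ℝ, M * X * M = M ↔ X = M⁻¹) :=
  symmetric_matrix_generalized_inverse_unique_iff_general M
end

section
/- Let U be an n-element set with n ≥ 1, let N = |Γ(U)| (the Bell number), and for 0 ≤ i ≤ n let S(n,i) denote the number of partitions of U with exactly i blocks (so S(n,0) = 0). For a real number t, the kernel of the linear endomorphism X ↦ T_n(t) · X · T_n(t) of the space of Γ(U)-indexed real matrices has dimension N² − (Σ_{i=0}^{q} S(n,i))² if t equals an integer q with 0 ≤ q ≤ n−1, and dimension 0 otherwise. Consequently, since the equation T_n(t) · B · T_n(t) = T_n(t) has at least one solution, its solution set is a coset of this kernel of that same dimension. -/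
attribute [local instance] Classical.propDecidable

/-!
Let `Z` be the zeta matrix of the partition lattice, `Z A C = [A ≤ C]`. Sorting the maps
`U → Fin k` by their kernels gives `k ^ |P| = ∑_{C ≥ P} k (k-1) ⋯ (k-|C|+1)`; as a polynomial
identity in `k` this yields `T_n(t) = Z · D · Zᵀ` with `D = diag((t)_{|C|})`, the falling
factorials. Since `Z` is unitriangular, `X ↦ T X T` is conjugate to `X ↦ D X D`, whose kernel
has codimension `#{C | (t)_{|C|} ≠ 0}²`, and `(t)_{|C|} = 0` exactly when `t ∈ {0, …, |C|-1}`.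
The particular solution `B₀` is a generalized inverse of `T`, which every matrix over a field has.
-/

open Polynomial Finset Matrix Module LinearMap

theorem LinearMap.finrank_ker_equiv_comp_comp_equiv {R V V' W W' : Type*} [Ring R]
    [AddCommGroup V] [Module R V] [AddCommGroup V'] [Module R V'] [AddCommGroup W] [Module R W]
    [AddCommGroup W'] [Module R W'] (e₁ : W ≃ₗ[R] W') (f : V →ₗ[R] W) (e₂ : V' ≃ₗ[R] V) :
    finrank R (ker (e₁.toLinearMap ∘ₗ f ∘ₗ e₂.toLinearMap)) = finrank R (ker f) := by
  rw [LinearEquiv.ker_comp, ker_comp, Submodule.comap_equiv_eq_map_symm,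
    LinearEquiv.finrank_map_eq]

theorem LinearMap.exists_comp_comp_eq_self {K V W : Type*} [DivisionRing K]
    [AddCommGroup V] [Module K V] [AddCommGroup W] [Module K W] (f : V →ₗ[K] W) :
    ∃ g : W →ₗ[K] V, f ∘ₗ g ∘ₗ f = f := by
  obtain ⟨s, hs⟩ := f.rangeRestrict.exists_rightInverse_of_surjective f.range_rangeRestrict
  obtain ⟨l, hl⟩ := f.range.subtype.exists_leftInverse_of_injective f.range.ker_subtype
  refine ⟨s ∘ₗ l, LinearMap.ext fun x => ?_⟩
  have hl' : l (f x) = f.rangeRestrict x := LinearMap.congr_fun hl (f.rangeRestrict x)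
  have hs' := congrArg Subtype.val (LinearMap.congr_fun hs (f.rangeRestrict x))
  simpa [hl'] using hs'

theorem Matrix.exists_mul_mul_eq_self {K m n : Type*} [Field K] [Fintype m] [Fintype n]
    [DecidableEq m] [DecidableEq n] (A : Matrix m n K) : ∃ B : Matrix n m K, A * B * A = A := by
  obtain ⟨g, hg⟩ := (toLin' A).exists_comp_comp_eq_self
  refine ⟨LinearMap.toMatrix' g, toLin'.injective ?_⟩
  rw [toLin'_mul, toLin'_mul, toLin'_toMatrix']
  exact hg

theorem finrank_ker_mulRight_comp_mulLeft_units_mul_mul {R A : Type*} [CommRing R] [Ring A]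
    [Algebra R A] (u v : Aˣ) (D : A) :
    finrank R (ker ((mulRight R (u * D * v : A)).comp (mulLeft R (u * D * v : A)))) =
      finrank R (ker ((mulRight R D).comp (mulLeft R D))) := by
  have hfactor : (mulRight R (u * D * v : A)).comp (mulLeft R (u * D * v : A)) =
      ((u.mulLeftLinearEquiv R A).trans (v.mulRightLinearEquiv R)).toLinearMap ∘ₗ
        (mulRight R D).comp (mulLeft R D) ∘ₗ
          ((u.mulRightLinearEquiv R).trans (v.mulLeftLinearEquiv R A)).toLinearMap := by
    ext X
    simp [mul_assoc]
  rw [hfactor, finrank_ker_equiv_comp_comp_equiv]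

theorem finrank_ker_mulRight_comp_mulLeft_diagonal {K ι : Type*} [Field K] [Fintype ι]
    [DecidableEq ι] (d : ι → K) :
    finrank K (ker ((mulRight K (diagonal d)).comp (mulLeft K (diagonal d)))) =
      Fintype.card ι ^ 2 - Fintype.card {i // d i ≠ 0} ^ 2 := by
  let e := (LinearEquiv.curry K K ι ι).trans (ofLinearEquiv K)
  let w : ι × ι → K := fun p => d p.1 * d p.2
  have hconj : (mulRight K (diagonal d)).comp (mulLeft K (diagonal d)) =
      e.toLinearMap ∘ₗ toLin' (diagonal w) ∘ₗ e.symm.toLinearMap := by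
    ext X i j
    simp only [coe_comp, Function.comp_apply, mulLeft_apply, mulRight_apply, mul_diagonal,
      diagonal_mul, LinearEquiv.trans_symm, LinearEquiv.coe_coe, LinearEquiv.trans_apply,
      coe_ofLinearEquiv_symm, LinearEquiv.coe_curry_symm, toLin'_apply, LinearEquiv.coe_curry,
      coe_ofLinearEquiv, of_apply, Function.curry_apply, mulVec_diagonal,
      Function.uncurry_apply_pair, of_symm_apply, e, w]
    ring
  have hsupp : Fintype.card {p // w p ≠ 0} = Fintype.card {i // d i ≠ 0} ^ 2 := by
    rw [sq, ← Fintype.card_prod]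
    exact Fintype.card_congr ((Equiv.subtypeEquivRight fun p => mul_ne_zero_iff).trans
      (Equiv.subtypeProdEquivProd (p := fun i => d i ≠ 0) (q := fun i => d i ≠ 0)))
  have hrn := (toLin' (diagonal w)).finrank_range_add_finrank_ker
  rw [Matrix.toLin'_apply', ← Matrix.rank, Matrix.rank_diagonal, hsupp,
    finrank_fintype_fun_eq_card, Fintype.card_prod, ← sq] at hrn
  rw [hconj, finrank_ker_equiv_comp_comp_equiv, Matrix.toLin'_apply']
  omega

def kerEqEquivEmbedding {β γ : Type*} (S : Setoid β) :
    {f : β → γ // Setoid.ker f = S} ≃ (Quotient S ↪ γ) where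
  toFun f := ⟨Quotient.lift f.1 fun a b h => by rwa [← f.2] at h,
    by rintro ⟨a⟩ ⟨b⟩ h; exact Quotient.sound (f.2 ▸ h)⟩
  invFun g := ⟨g ∘ Quotient.mk S, by ext a b; exact g.injective.eq_iff.trans Quotient.eq⟩
  left_inv f := rfl
  right_inv g := by ext q; induction q using Quotient.ind; rfl

theorem card_fun_eq_sum_card_embedding {β : Type} {γ : Type*} [Finite β] [Finite γ] :
    Nat.card (β → γ) = ∑ S : Setoid β, Nat.card (Quotient S ↪ γ) := by
  rw [← Nat.card_congr (Equiv.sigmaFiberEquiv (Setoid.ker : (β → γ) → Setoid β)), Nat.card_sigma]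
  exact Finset.sum_congr rfl fun S _ => Nat.card_congr (kerEqEquivEmbedding S)

theorem pow_card_eq_sum_descFactorial (β : Type) [Finite β] (k : ℕ) :
    k ^ Nat.card β = ∑ S : Setoid β, k.descFactorial (nblocks S) := by
  have := Fintype.ofFinite β
  rw [← Nat.card_fin k, ← Nat.card_fun, card_fun_eq_sum_card_embedding]
  refine Finset.sum_congr rfl fun S _ => ?_
  rw [Nat.card_eq_fintype_card, Fintype.card_embedding_eq, nblocks, Nat.card_eq_fintype_card]
  simp

theorem pow_card_eq_sum_descPochhammer_eval {R : Type*} [CommRing R] (β : Type) [Finite β]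
    (t : R) : t ^ Nat.card β = ∑ S : Setoid β, (descPochhammer R (nblocks S)).eval t := by
  have hℤ : (X : ℤ[X]) ^ Nat.card β = ∑ S : Setoid β, descPochhammer ℤ (nblocks S) := by
    refine eq_of_infinite_eval_eq _ _ ((Set.infinite_range_of_injective Nat.cast_injective).mono ?_)
    rintro _ ⟨k, rfl⟩
    simp only [Set.mem_ofPred_eq, eval_pow, eval_X, eval_finsetSum,
      descPochhammer_eval_eq_descFactorial]
    exact_mod_cast pow_card_eq_sum_descFactorial β k
  simpa [Polynomial.map_sum, descPochhammer_map, eval_finsetSum] using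
    congrArg (fun p => (p.map (Int.castRingHom R)).eval t) hℤ

theorem nblocks_correspondence_symm {α : Type} (P : Setoid α) (S : Setoid (Quotient P)) :
    nblocks ((Setoid.correspondence P).symm S : Setoid α) = nblocks S := by
  change Nat.card (Quotient (Setoid.comap Quotient.mk' S)) = Nat.card (Quotient S)
  rw [Setoid.comap_eq]
  exact Nat.card_congr (Setoid.quotientKerEquivOfSurjective _
    ((Quotient.mk''_surjective).comp Quotient.mk''_surjective))

theorem sum_filter_le_eq_sum_setoid_quotient {α : Type} [Finite α] {M : Type*} [AddCommMonoid M]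
    (P : Setoid α) (f : ℕ → M) :
    ∑ C with P ≤ C, f (nblocks C) = ∑ S : Setoid (Quotient P), f (nblocks S) := by
  rw [Finset.sum_subtype (p := (P ≤ ·)) _ (fun C => by simp) (fun C => f (nblocks C))]
  exact Fintype.sum_equiv (Setoid.correspondence P).toEquiv _ _ fun C => by
    rw [← nblocks_correspondence_symm P]
    simp

theorem pow_nblocks_eq_sum_descPochhammer_eval {α : Type} [Finite α] {R : Type*} [CommRing R]
    (P : Setoid α) (t : R) :
    t ^ nblocks P = ∑ C with P ≤ C, (descPochhammer R (nblocks C)).eval t := by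
  rw [sum_filter_le_eq_sum_setoid_quotient P fun k => (descPochhammer R k).eval t, nblocks,
    pow_card_eq_sum_descPochhammer_eval]

def zetaMatrix (ι R : Type*) [LE ι] [DecidableLE ι] [Zero R] [One R] : Matrix ι ι R :=
  of fun a b => if a ≤ b then 1 else 0

theorem det_zetaMatrix {ι R : Type*} [PartialOrder ι] [DecidableLE ι] [Fintype ι] [DecidableEq ι]
    [CommRing R] : (zetaMatrix ι R).det = 1 := by
  have hM : (zetaMatrix ι R).BlockTriangular toLinearExtension := fun i j hji =>
    if_neg fun hij => (toLinearExtension.monotone hij).not_gt hji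
  rw [hM.det]
  refine Finset.prod_eq_one fun a _ => ?_
  have hblock : (zetaMatrix ι R).toSquareBlock toLinearExtension a = 1 := by
    ext ⟨i, hi⟩ ⟨j, hj⟩
    obtain rfl : i = j := hi.trans hj.symm
    simp [toSquareBlock_def, zetaMatrix]
  rw [hblock, det_one]

theorem Tmat_eq_zetaMatrix_mul_diagonal_mul_transpose (α : Type) [Finite α] (t : ℝ) :
    Tmat α t = zetaMatrix (Setoid α) ℝ *
      diagonal (fun C => (descPochhammer ℝ (nblocks C)).eval t) * (zetaMatrix (Setoid α) ℝ)ᵀ := by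
  ext A B
  rw [mul_apply]
  simp only [Tmat, of_apply, mul_diagonal, transpose_apply, zetaMatrix,
    pow_nblocks_eq_sum_descPochhammer_eval (A ⊔ B), sum_filter, sup_le_iff]
  refine Finset.sum_congr rfl fun C _ => ?_
  by_cases hA : A ≤ C <;> by_cases hB : B ≤ C <;> simp [hA, hB]

theorem descPochhammer_eval_eq_zero_iff {R : Type*} [CommRing R] [IsDomain R] (n : ℕ) (r : R) :
    (descPochhammer R n).eval r = 0 ↔ ∃ j < n, r = j := by
  simp [descPochhammer_eval_eq_prod_range, Finset.prod_eq_zero_iff, sub_eq_zero]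

theorem nblocks_le_card {α : Type} [Finite α] (A : Setoid α) : nblocks A ≤ Nat.card α :=
  Nat.card_le_card_of_surjective _ Quotient.mk''_surjective

theorem card_filter_nblocks_le (α : Type) [Finite α] (q : ℕ) :
    #{C : Setoid α | nblocks C ≤ q} = ∑ i ∈ range (q + 1), #{C : Setoid α | nblocks C = i} := by
  rw [card_eq_sum_card_fiberwise (f := nblocks) (t := range (q + 1)) fun C hC => by
    simpa [Nat.lt_succ_iff] using hC]
  refine sum_congr rfl fun i hi => ?_
  rw [filter_filter]
  refine congrArg card (filter_congr fun C _ => ?_)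
  simp only [mem_range] at hi
  omega

theorem finrank_ker_mulRight_comp_mulLeft_Tmat (α : Type) [Finite α] (t : ℝ) :
    finrank ℝ (ker ((mulRight ℝ (Tmat α t)).comp (mulLeft ℝ (Tmat α t)))) =
      Nat.card (Setoid α) ^ 2 -
        #{C : Setoid α | (descPochhammer ℝ (nblocks C)).eval t ≠ 0} ^ 2 := by
  have hZ : IsUnit (zetaMatrix (Setoid α) ℝ) :=
    (Matrix.isUnit_iff_isUnit_det _).2 (by simp [det_zetaMatrix])
  obtain ⟨v, hv⟩ := (Matrix.isUnit_transpose _).2 hZ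
  obtain ⟨u, hu⟩ := hZ
  rw [Tmat_eq_zetaMatrix_mul_diagonal_mul_transpose, ← hv, ← hu,
    finrank_ker_mulRight_comp_mulLeft_units_mul_mul, finrank_ker_mulRight_comp_mulLeft_diagonal,
    Fintype.card_subtype, Nat.card_eq_fintype_card]

theorem Tmat_kernel_dimension_general
    (U : Type) [Fintype U] (n : ℕ) (hcard : Fintype.card U = n) (t : ℝ) :
    (∀ q : ℕ, q ≤ n - 1 → t = (q : ℝ) →
      Module.finrank ℝ
          (LinearMap.ker
            ((LinearMap.mulRight ℝ (Tmat U t)).comp (LinearMap.mulLeft ℝ (Tmat U t)))) =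
        Nat.card (Setoid U) ^ 2 -
          (∑ i ∈ Finset.range (q + 1),
            (Finset.univ.filter fun A : Setoid U => nblocks A = i).card) ^ 2) ∧
    ((¬ ∃ q : ℕ, q ≤ n - 1 ∧ t = (q : ℝ)) →
      Module.finrank ℝ
          (LinearMap.ker
            ((LinearMap.mulRight ℝ (Tmat U t)).comp (LinearMap.mulLeft ℝ (Tmat U t)))) = 0) ∧
    (∃ B₀ : Matrix (Setoid U) (Setoid U) ℝ,
      Tmat U t * B₀ * Tmat U t = Tmat U t ∧
      {X : Matrix (Setoid U) (Setoid U) ℝ | Tmat U t * X * Tmat U t = Tmat U t} =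
        {X : Matrix (Setoid U) (Setoid U) ℝ |
          X - B₀ ∈
            LinearMap.ker
              ((LinearMap.mulRight ℝ (Tmat U t)).comp (LinearMap.mulLeft ℝ (Tmat U t)))}) := by
  refine ⟨fun q _ ht => ?_, fun ht => ?_, ?_⟩
  · rw [finrank_ker_mulRight_comp_mulLeft_Tmat, ← card_filter_nblocks_le]
    congr 3
    refine filter_congr fun C _ => ?_
    simp [descPochhammer_eval_eq_zero_iff, ht]
  · have hnonzero : ∀ C : Setoid U, (descPochhammer ℝ (nblocks C)).eval t ≠ 0 := by
      intro C hC
      obtain ⟨j, hj, rfl⟩ := (descPochhammer_eval_eq_zero_iff _ t).1 hC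
      have hle : nblocks C ≤ n := by simpa [hcard] using nblocks_le_card C
      exact ht ⟨j, by omega, rfl⟩
    rw [finrank_ker_mulRight_comp_mulLeft_Tmat, filter_true_of_mem fun C _ => hnonzero C,
      card_univ, Nat.card_eq_fintype_card, Nat.sub_self]
  · obtain ⟨B₀, hB₀⟩ := (Tmat U t).exists_mul_mul_eq_self
    refine ⟨B₀, hB₀, Set.ext fun X => ?_⟩
    rw [Set.mem_ofPred_eq, Set.mem_ofPred_eq, LinearMap.sub_mem_ker_iff]
    simp [hB₀]

/-- the dimension of the kernel of `X ↦ T_n(t)·X·T_n(t)`, and the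
solution set of `T_n(t)·B·T_n(t) = T_n(t)` as a coset of this kernel. -/
theorem Tmat_kernel_dimension
    (U : Type) [Fintype U] (n : ℕ) (hn : 1 ≤ n) (hcard : Fintype.card U = n) (t : ℝ) :
    (∀ q : ℕ, q ≤ n - 1 → t = (q : ℝ) →
      Module.finrank ℝ
          (LinearMap.ker
            ((LinearMap.mulRight ℝ (Tmat U t)).comp (LinearMap.mulLeft ℝ (Tmat U t)))) =
        Nat.card (Setoid U) ^ 2 -
          (∑ i ∈ Finset.range (q + 1),
            (Finset.univ.filter fun A : Setoid U => nblocks A = i).card) ^ 2) ∧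
    ((¬ ∃ q : ℕ, q ≤ n - 1 ∧ t = (q : ℝ)) →
      Module.finrank ℝ
          (LinearMap.ker
            ((LinearMap.mulRight ℝ (Tmat U t)).comp (LinearMap.mulLeft ℝ (Tmat U t)))) = 0) ∧
    (∃ B₀ : Matrix (Setoid U) (Setoid U) ℝ,
      Tmat U t * B₀ * Tmat U t = Tmat U t ∧
      {X : Matrix (Setoid U) (Setoid U) ℝ | Tmat U t * X * Tmat U t = Tmat U t} =
        {X : Matrix (Setoid U) (Setoid U) ℝ |
          X - B₀ ∈
            LinearMap.ker
              ((LinearMap.mulRight ℝ (Tmat U t)).comp (LinearMap.mulLeft ℝ (Tmat U t)))}) :=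
  Tmat_kernel_dimension_general U n hcard t
end
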